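/- Let L be any finitary first-order language, T an L-theory, and φ an L-sentence. Let Θ be the set of all universal (Π⁰₁) L-sentences ψ such that T ∪ {φ} ⊨ ψ. Then the following are equivalent: (i) there is a single L-sentence χ such that for every nonempty L-structure A with A ⊨ T, A ⊨ χ iff there exist B ⊨ T ∪ {φ} and an L-embedding of A into B; (ii) Θ has a strongest member, i.e., there is ψ₀ ∈ Θ such that T ∪ {ψ₀} ⊨ ψ for every ψ ∈ Θ. -/

import Mathlib

/-!
A structure `A` embeds into a model of `T ∪ {φ}` iff it satisfies every member of `Θ`: otherwise
`T ∪ {φ}` together with the quantifier-free diagram of `A` is unsatisfiable, so by compactness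
some quantifier-free formula true in `A` is refuted by `T ∪ {φ}`, and its universal negation is a
member of `Θ` false in `A`. Hence `θ*(φ)` is axiomatized over `T` by `Θ`, and a strongest member
of `Θ` expresses it. Conversely, if `χ` expresses `θ*(φ)`, then `T ∪ Θ ⊨ χ`, so by compactness `χ`
follows from `T` and finitely many members of `Θ`. Their conjunction is again a universal sentence
`ψ₀ ∈ Θ`, and it is strongest: a model of `T ∪ {ψ₀}` satisfies `χ`, so it embeds into a model of
`T ∪ {φ}` and therefore satisfies all of `Θ`.
-/

open FirstOrder Language

universe u v

namespace SatSub

/-- A universal (Π⁰₁) sentence: `∀ x₁ … x_k, ψ` with `ψ` quantifier-free. -/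
def IsUniversalSentence {L : FirstOrder.Language.{u, v}} (χ : L.Sentence) : Prop :=
  ∃ (k : ℕ) (ψ : L.BoundedFormula Empty k), ψ.IsQF ∧ χ = ψ.alls

/-- The set Θ of universal sentences that are consequences of T ∪ {φ}
(over nonempty structures). -/
def univConsequences {L : FirstOrder.Language.{u, v}} (T : L.Theory) (φ : L.Sentence) :
    Set L.Sentence :=
  {ψ | IsUniversalSentence ψ ∧
    ∀ (N : Type (max u v)) [L.Structure N] [Nonempty N], N ⊨ T → N ⊨ φ → N ⊨ ψ}

universe w

open BoundedFormula

variable {L : FirstOrder.Language.{u, v}}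

section QuantifierFree

variable {α β : Type*} {n : ℕ}

theorem _root_.FirstOrder.Language.BoundedFormula.IsQF.toFormula {φ : L.BoundedFormula α n}
    (h : φ.IsQF) : φ.toFormula.IsQF := by
  induction h with
  | falsum => exact IsQF.falsum
  | of_isAtomic h =>
    cases h with
    | equal => exact (IsAtomic.equal _ _).isQF
    | rel => exact (IsAtomic.rel _ _).isQF
  | imp _ _ ih₁ ih₂ => exact ih₁.imp ih₂

theorem _root_.FirstOrder.Language.BoundedFormula.IsQF.restrictFreeVar [DecidableEq α]
    {φ : L.BoundedFormula α n} (h : φ.IsQF) (f : φ.freeVarFinset → β) :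
    (φ.restrictFreeVar f).IsQF := by
  induction h with
  | falsum => exact IsQF.falsum
  | of_isAtomic h =>
    cases h with
    | equal => exact (IsAtomic.equal _ _).isQF
    | rel => exact (IsAtomic.rel _ _).isQF
  | imp _ _ ih₁ ih₂ => exact (ih₁ _).imp (ih₂ _)

theorem _root_.FirstOrder.Language.Formula.isQF_iInf [Finite β] {f : β → L.Formula α}
    (h : ∀ b, (f b).IsQF) : (Formula.iInf f).IsQF := by
  suffices ∀ l : List (L.Formula α), (∀ φ ∈ l, φ.IsQF) → (l.foldr (· ⊓ ·) ⊤).IsQF from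
    this _ (by simp [h])
  intro l hl
  induction l with
  | nil => exact IsQF.top
  | cons φ l ih => exact (hl φ (by simp)).inf (ih fun ψ hψ => hl ψ (by simp [hψ]))

end QuantifierFree

section Universal

theorem _root_.FirstOrder.Language.BoundedFormula.IsUniversal.alls {α : Type*} {n : ℕ}
    {φ : L.BoundedFormula α n} (h : φ.IsUniversal) : φ.alls.IsUniversal := by
  induction n with
  | zero => exact h
  | succ n ih => exact ih h.all

theorem IsUniversalSentence.isUniversal {χ : L.Sentence} (h : IsUniversalSentence χ) :
    χ.IsUniversal := by
  obtain ⟨k, ψ, hψ, rfl⟩ := h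
  exact hψ.isUniversal.alls

theorem IsUniversalSentence.realize_of_embedding {χ : L.Sentence} (h : IsUniversalSentence χ)
    {A B : Type*} [L.Structure A] [L.Structure B] (f : A ↪[L] B) (hB : B ⊨ χ) : A ⊨ χ := by
  have hf := h.isUniversal.realize_embedding f (v := default) (xs := default)
  rw [Subsingleton.elim (f ∘ default) default, Subsingleton.elim (f ∘ default) default] at hf
  exact hf hB

noncomputable def univClosure {γ : Type*} [Finite γ] (θ : L.Formula γ) : L.Sentence :=
  (θ.relabel (Sum.inr : γ → Empty ⊕ γ)).iAlls γ

theorem isUniversalSentence_univClosure {γ : Type*} [Finite γ] {θ : L.Formula γ}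
    (h : θ.IsQF) : IsUniversalSentence (univClosure θ) :=
  ⟨_, _, (h.relabel _).relabel _, rfl⟩

theorem realize_univClosure {γ : Type*} [Finite γ] {θ : L.Formula γ} {M : Type*}
    [L.Structure M] : M ⊨ univClosure θ ↔ ∀ v : γ → M, θ.Realize v := by
  simp [univClosure, Sentence.Realize, Formula.realize_relabel, Function.comp_def]

theorem exists_isUniversalSentence_realize_iff_forall_mem (s : Finset L.Sentence)
    (hs : ∀ χ ∈ s, IsUniversalSentence χ) :
    ∃ ψ : L.Sentence, IsUniversalSentence ψ ∧
      ∀ (M : Type w) [L.Structure M] [Nonempty M], M ⊨ ψ ↔ ∀ χ ∈ s, M ⊨ χ := by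
  classical
  -- `⋀ᵢ ∀ x̄ᵢ, θᵢ` becomes `∀ (x̄ᵢ)ᵢ, ⋀ᵢ θᵢ` with one block of variables `Fin kᵢ` per conjunct;
  -- nonemptiness of `M` lets each block be chosen independently of the others.
  choose k θ hθ hχ using fun χ : s => hs χ χ.2
  let Φ : L.Formula (Σ χ : s, Fin (k χ)) := Formula.iInf fun χ =>
    (θ χ).toFormula.relabel (Sum.elim Empty.elim (Sigma.mk χ))
  refine ⟨univClosure Φ, isUniversalSentence_univClosure
    (Formula.isQF_iInf fun χ => ((hθ χ).toFormula.relabel _)), fun M _ _ => ?_⟩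
  have hΦ : ∀ v : _ → M, Φ.Realize v ↔ ∀ χ, (θ χ).Realize default fun i => v ⟨χ, i⟩ := by
    intro v
    refine Formula.realize_iInf.trans (forall_congr' fun χ => ?_)
    rw [Formula.realize_relabel, realize_toFormula, Subsingleton.elim (_ ∘ Sum.inl) default]
    rfl
  have hχM : ∀ χ : s, M ⊨ (χ : L.Sentence) ↔ ∀ xs, (θ χ).Realize default xs := fun χ => by
    rw [hχ χ]
    exact realize_alls
  rw [realize_univClosure]
  constructor
  · intro h χ hχs
    refine (hχM ⟨χ, hχs⟩).2 fun xs => ?_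
    let v := Sigma.uncurry (Function.update (fun χ (_ : Fin (k χ)) => Classical.arbitrary M)
      ⟨χ, hχs⟩ xs)
    simpa [v, Sigma.uncurry] using (hΦ v).1 (h v) ⟨χ, hχs⟩
  · exact fun h v => (hΦ v).2 fun χ => (hχM χ).1 (h χ χ.2) _

end Universal

section Diagram

variable {M N : Type*} [L.Structure M] [L.Structure N]

def embeddingOfRealizeQF (f : M → N)
    (hf : ∀ ψ : L.Formula M, ψ.IsQF → ψ.Realize id → ψ.Realize f) : M ↪[L] N where
  toFun := f
  inj' a b hab := by
    by_contra hne
    refine absurd hab ?_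
    simpa using hf ((Term.var a).equal (Term.var b)).not (IsAtomic.equal _ _).isQF.not
      (by simpa using hne)
  map_fun' F x := by
    simpa [Function.comp_def] using (hf ((Term.func F fun i => Term.var (x i)).equal
      (Term.var (Structure.funMap F x))) (IsAtomic.equal _ _).isQF (by simp)).symm
  map_rel' r x := by
    refine ⟨fun hfx => ?_, fun hx => ?_⟩
    · by_contra hnx
      refine absurd hfx ?_
      simpa [Function.comp_def] using
        hf (r.formula fun i => Term.var (x i)).not (IsAtomic.rel _ _).isQF.not (by simpa using hnx)
    · simpa [Function.comp_def] using
        hf (r.formula fun i => Term.var (x i)) (IsAtomic.rel _ _).isQF (by simpa using hx)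

def qfDiagram (M : Type*) [L.Structure M] : L[[M]].Theory :=
  {χ | (Formula.equivSentence.symm χ).IsQF ∧ (Formula.equivSentence.symm χ).Realize id}

end Diagram

section UniversalPart

def universalPart (S : L.Theory) : L.Theory :=
  {ψ | IsUniversalSentence ψ ∧
    ∀ (N : Type (max u v)) [L.Structure N] [Nonempty N], N ⊨ S → N ⊨ ψ}

variable {S : L.Theory} {M : Type*} [L.Structure M]

theorem exists_model_realize_of_model_universalPart (hM : M ⊨ universalPart S) {γ : Type*}
    [Finite γ] {θ : L.Formula γ} (hθ : θ.IsQF) {v : γ → M} (hv : θ.Realize v) :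
    ∃ (N : Type (max u v)) (_ : L.Structure N) (_ : Nonempty N), N ⊨ S ∧
      ∃ w : γ → N, θ.Realize w := by
  by_contra! h
  have hmem : univClosure θ.not ∈ universalPart S :=
    ⟨isUniversalSentence_univClosure hθ.not, fun N _ _ hN =>
      realize_univClosure.2 fun w => Formula.realize_not.2 (h N ‹_› ‹_› hN w)⟩
  exact realize_univClosure.1 (hM.realize_of_mem _ hmem) v hv

theorem exists_model_realize_of_realize_id (hM : M ⊨ universalPart S) {Ψ : L.Formula M}
    (hΨ : Ψ.IsQF) (hid : Ψ.Realize id) :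
    ∃ (N : Type (max u v)) (_ : L.Structure N) (_ : Nonempty N), N ⊨ S ∧
      ∃ c : M → N, Ψ.Realize c := by
  classical
  obtain ⟨N, _, _, hN, w, hw⟩ := exists_model_realize_of_model_universalPart hM
    (hΨ.restrictFreeVar id) (v := Subtype.val)
    ((realize_restrictFreeVar (f := id) (v := Subtype.val) id fun _ => rfl).2 hid)
  let c : M → N := fun a => if ha : a ∈ Ψ.freeVarFinset then w ⟨a, ha⟩ else Classical.arbitrary N
  exact ⟨N, _, ‹_›, hN, c, (realize_restrictFreeVar c fun a => by simp [c]).1 hw⟩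

theorem isSatisfiable_onTheory_union_qfDiagram (hM : M ⊨ universalPart S) :
    ((L.lhomWithConstants M).onTheory S ∪ qfDiagram M).IsSatisfiable := by
  rw [Theory.isSatisfiable_iff_isFinitelySatisfiable]
  intro T0 hT0
  let F : Set (L.Formula M) := Formula.equivSentence.symm '' (↑T0 ∩ qfDiagram M)
  have : Finite F := ((T0.finite_toSet.inter_of_left _).image _).to_subtype
  let Ψ : L.Formula M := Formula.iInf fun ψ : F => ψ.1
  have hΨ : Ψ.IsQF := Formula.isQF_iInf (by rintro ⟨_, χ, hχ, rfl⟩; exact hχ.2.1)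
  have hid : Ψ.Realize id := Formula.realize_iInf.2 (by rintro ⟨_, χ, hχ, rfl⟩; exact hχ.2.2)
  obtain ⟨N, _, _, hN, c, hc⟩ := exists_model_realize_of_realize_id hM hΨ hid
  let := constantsOn.structure c
  have : N ⊨ (T0 : L[[M]].Theory) := ⟨fun χ hχ => by
    rcases hT0 hχ with hS | hD
    · exact ((LHom.onTheory_model _ _).2 hN).realize_of_mem χ hS
    · exact (Formula.realize_equivSentence_symm N χ c).1
        (Formula.realize_iInf.1 hc ⟨_, χ, ⟨hχ, hD⟩, rfl⟩)⟩
  exact Theory.Model.isSatisfiable N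

end UniversalPart

theorem exists_embedding_of_model_universalPart {S : L.Theory} {M : Type (max u v)}
    [L.Structure M] (hM : M ⊨ universalPart S) :
    ∃ (B : Type (max u v)) (_ : L.Structure B), B ⊨ S ∧ Nonempty (M ↪[L] B) := by
  obtain ⟨N⟩ := isSatisfiable_onTheory_union_qfDiagram hM
  let : L.Structure N := (L.lhomWithConstants M).reduct N
  have : (L.lhomWithConstants M).IsExpansionOn N := LHom.isExpansionOn_reduct _ _
  refine ⟨N, inferInstance,
    (LHom.onTheory_model _ _).1 (N.is_model.mono Set.subset_union_left),
    ⟨embeddingOfRealizeQF (fun a => (L.con a : N)) fun ψ hψ hid => ?_⟩⟩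
  have hmem : Formula.equivSentence ψ ∈ qfDiagram M := by simpa [qfDiagram] using ⟨hψ, hid⟩
  exact (Formula.realize_equivSentence N ψ).1 (N.is_model.realize_of_mem _ (Or.inr hmem))

section Consequences

variable {T : L.Theory} {φ : L.Sentence}

theorem univConsequences_eq_universalPart : univConsequences T φ = universalPart (T ∪ {φ}) := by
  ext ψ
  simp only [univConsequences, universalPart, Set.mem_ofPred_eq, Theory.model_union_iff,
    Theory.model_singleton_iff, and_imp]

theorem exists_embedding_iff_forall_univConsequences {M : Type (max u v)} [L.Structure M]
    [Nonempty M] :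
    (∃ (B : Type (max u v)) (_ : L.Structure B), B ⊨ T ∧ B ⊨ φ ∧ Nonempty (M ↪[L] B)) ↔
      ∀ ψ ∈ univConsequences T φ, M ⊨ ψ := by
  constructor
  · rintro ⟨B, _, hT, hφ, ⟨f⟩⟩ ψ hψ
    have : Nonempty B := ⟨f (Classical.arbitrary M)⟩
    exact hψ.1.realize_of_embedding f (hψ.2 B hT hφ)
  · intro h
    rw [univConsequences_eq_universalPart] at h
    obtain ⟨B, _, hB, hf⟩ := exists_embedding_of_model_universalPart ⟨h⟩
    rw [Theory.model_union_iff, Theory.model_singleton_iff] at hB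
    exact ⟨B, _, hB.1, hB.2, hf⟩

theorem exists_mem_univConsequences_of_forall {χ : L.Sentence}
    (h : ∀ (M : Type (max u v)) [L.Structure M] [Nonempty M], M ⊨ T →
      (∀ ψ ∈ univConsequences T φ, M ⊨ ψ) → M ⊨ χ) :
    ∃ ψ₀ ∈ univConsequences T φ,
      ∀ (M : Type (max u v)) [L.Structure M] [Nonempty M], M ⊨ T → M ⊨ ψ₀ → M ⊨ χ := by
  classical
  have hχ : (T ∪ univConsequences T φ) ⊨ᵇ χ := Theory.models_sentence_iff.2 fun N =>
    h N (N.is_model.mono Set.subset_union_left) fun ψ hψ => N.is_model.realize_of_mem ψ (Or.inr hψ)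
  obtain ⟨T0, hT0, hT0χ⟩ := Theory.models_iff_finset_models.1 hχ
  obtain ⟨T1, Θ0, rfl, hT1, hΘ0⟩ := Finset.subset_union_elim hT0
  obtain ⟨ψ₀, hψ₀, hiff⟩ :=
    exists_isUniversalSentence_realize_iff_forall_mem Θ0 fun ψ hψ => (hΘ0 hψ).1.1
  refine ⟨ψ₀, ⟨hψ₀, fun N _ _ hT hφ => (hiff N).2 fun ψ hψ => (hΘ0 hψ).1.2 N hT hφ⟩,
    fun M _ _ hT h₀ => ?_⟩
  have : M ⊨ ((T1 ∪ Θ0 : Finset L.Sentence) : L.Theory) := ⟨fun ψ hψ =>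
    (Finset.mem_union.1 hψ).elim (fun h₁ => hT.realize_of_mem ψ (hT1 h₁))
      fun h₂ => (hiff M).1 h₀ ψ h₂⟩
  exact hT0χ.realize_sentence M

end Consequences

theorem thetaStar_sentence_iff_strongest_universal_consequence
    {L : FirstOrder.Language.{u, v}} (T : L.Theory) (φ : L.Sentence) :
    (∃ χ : L.Sentence,
        ∀ (M : Type (max u v)) [L.Structure M] [Nonempty M], M ⊨ T →
          (M ⊨ χ ↔ ∃ (B : Type (max u v)) (_ : L.Structure B),
            B ⊨ T ∧ B ⊨ φ ∧ Nonempty (M ↪[L] B))) ↔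
      (∃ ψ₀ ∈ univConsequences T φ, ∀ ψ ∈ univConsequences T φ,
        ∀ (M : Type (max u v)) [L.Structure M] [Nonempty M],
          M ⊨ T → M ⊨ ψ₀ → M ⊨ ψ) := by
  constructor
  · rintro ⟨χ, hχ⟩
    obtain ⟨ψ₀, hψ₀, hψ₀χ⟩ := exists_mem_univConsequences_of_forall (χ := χ)
      fun M _ _ hT hΘ => (hχ M hT).2 (exists_embedding_iff_forall_univConsequences.2 hΘ)
    exact ⟨ψ₀, hψ₀, fun ψ hψ M _ _ hT h₀ =>
      exists_embedding_iff_forall_univConsequences.1 ((hχ M hT).1 (hψ₀χ M hT h₀)) ψ hψ⟩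
  · rintro ⟨ψ₀, hψ₀, hstrongest⟩
    refine ⟨ψ₀, fun M _ _ hT => ?_⟩
    rw [exists_embedding_iff_forall_univConsequences]
    exact ⟨fun h₀ ψ hψ => hstrongest ψ hψ M hT h₀, fun h => h ψ₀ hψ₀⟩

end SatSub
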